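/- Let n be odd and let C = (C₀,…,C_{k−1}) be an equitable k-partition of the halved n-cube (the graph on even-weight binary words of length n with adjacency given by Hamming distance 2). Define C′_i = C_i ∪ (C_i + 1̄), where 1̄ is the all-ones word. Then (C′₀,…,C′_{k−1}) is an equitable k-partition of the n-cube H(n) (the graph on all binary words of length n with adjacency given by Hamming distance 1). Its quotient matrix is determined by the distance-(n−1)/2 distribution matrices of C in the halved n-cube. -/

import Mathlib

open Finset

/-- The hypercube graph on binary words indexed by `ι`. -/
def cube (ι : Type*) [Fintype ι] [DecidableEq ι] : SimpleGraph (ι → ZMod 2) where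
  Adj x y := hammingDist x y = 1
  symm := ⟨fun x y h => by simpa [hammingDist_comm] using h⟩
  loopless := ⟨fun x h => by simp [hammingDist_self] at h⟩

instance (ι : Type*) [Fintype ι] [DecidableEq ι] : DecidableRel (cube ι).Adj :=
  fun x y => inferInstanceAs (Decidable (hammingDist x y = 1))

/-- The halved hypercube: even-weight words, adjacent iff Hamming distance 2. -/
def halvedCube (ι : Type*) [Fintype ι] [DecidableEq ι] :
    SimpleGraph {x : ι → ZMod 2 // Even (hammingDist x 0)} where
  Adj x y := hammingDist x.1 y.1 = 2
  symm := ⟨fun x y h => by simpa [hammingDist_comm] using h⟩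
  loopless := ⟨fun x h => by simp [hammingDist_self] at h⟩

instance (ι : Type*) [Fintype ι] [DecidableEq ι] : DecidableRel (halvedCube ι).Adj :=
  fun x y => inferInstanceAs (Decidable (hammingDist x.1 y.1 = 2))

variable {V : Type*} [Fintype V] [DecidableEq V]

/-- Number of neighbors of `v` in the set `C`. -/
def nbrCount (G : SimpleGraph V) [DecidableRel G.Adj] (v : V) (C : Finset V) : ℕ :=
  (C.filter (G.Adj v)).card

/-- `(C0, C1)` is an equitable 2-partition with quotient matrix `[[a,b],[c,d]]`. -/
def IsEquitable2 (G : SimpleGraph V) [DecidableRel G.Adj] (C0 C1 : Finset V)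
    (a b c d : ℕ) : Prop :=
  Disjoint C0 C1 ∧ C0 ∪ C1 = Finset.univ ∧
  (∀ v ∈ C0, nbrCount G v C0 = a ∧ nbrCount G v C1 = b) ∧
  (∀ v ∈ C1, nbrCount G v C0 = c ∧ nbrCount G v C1 = d)

/-- `C` is an equitable `k`-partition with quotient matrix `S`. -/
def IsEquitableK (G : SimpleGraph V) [DecidableRel G.Adj] {k : ℕ}
    (C : V → Fin k) (S : Fin k → Fin k → ℕ) : Prop :=
  ∀ (v : V) (j : Fin k),
    (Finset.univ.filter (fun w => G.Adj v w ∧ C w = j)).card = S (C v) j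

/-!
For odd `n` the complement map `x ↦ x + 1̄` swaps even and odd words, and the neighbours of `x`
in `H(n)` are exactly the words at Hamming distance `n - 1` from `x + 1̄`. Hence the number of
neighbours of `x` in `C'ⱼ` is the number of words of `Cⱼ` at distance `(n - 1) / 2` in the halved
cube from whichever of `x`, `x + 1̄` is even. The halved cube is distance-regular (translations and
coordinate permutations act transitively on pairs of words at a given distance), and in a
distance-regular graph the recursion `A₁ A_e = Σₕ p^h_{1,e} A_h` shows, by induction on `e`, that an
equitable partition is equitable for every distance-`e` relation as well.
-/

section DistanceRegular

variable {α : Type*} [Fintype α] (G : SimpleGraph α) [DecidableRel G.Adj]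
  (δ : α → α → ℕ) (p : ℕ → ℕ → ℕ)

/-- `δ` is the path metric of `G`, and `G` is distance-regular with intersection numbers
`p h e = p^h_{1,e}`. -/
structure IsDistanceRegularWith : Prop where
  eq_zero_iff : ∀ {x z}, δ x z = 0 ↔ x = z
  le_succ_of_adj : ∀ {x y} z, G.Adj x y → δ x z ≤ δ y z + 1
  exists_adj_of_eq_succ : ∀ {x z e}, δ x z = e + 1 → ∃ y, G.Adj x y ∧ δ y z = e
  card_adj_eq : ∀ x z e, #{y | G.Adj x y ∧ δ y z = e} = p (δ x z) e

variable {k : ℕ}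

def distCellCount (C : α → Fin k) (x : α) (h : ℕ) (j : Fin k) : ℕ :=
  #{z | δ x z = h ∧ C z = j}

variable {G δ p} {C : α → Fin k} {S : Fin k → Fin k → ℕ}

theorem IsEquitableK.sum_adj_factorsThrough (hC : IsEquitableK G C S) {g : α → ℕ}
    (hg : g.FactorsThrough C) :
    (fun x => ∑ y with G.Adj x y, g y).FactorsThrough C := by
  have key : ∀ x, ∑ y with G.Adj x y, g y = ∑ i, S (C x) i * Function.extend C g 0 i := by
    intro x
    rw [← sum_fiberwise_of_maps_to (g := C) (t := univ) fun _ _ => mem_univ _]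
    refine sum_congr rfl fun i _ => ?_
    rw [← hC x i, ← filter_filter]
    exact sum_const_nat fun y hy => by rw [← (mem_filter.1 hy).2, hg.extend_apply]
  intro x x' hxx'
  simp only [key, hxx']

namespace IsDistanceRegularWith

theorem distCellCount_zero (hG : IsDistanceRegularWith G δ p) (x : α) (j : Fin k) :
    distCellCount δ C x 0 j = if C x = j then 1 else 0 := by
  have : ∀ z, δ x z = 0 ∧ C z = j ↔ z = x ∧ C x = j := fun z => by
    rw [hG.eq_zero_iff]; constructor <;> rintro ⟨rfl, h⟩ <;> exact ⟨rfl, h⟩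
  split_ifs with hx
  · exact card_eq_one.2 ⟨x, by ext z; simp [this, hx]⟩
  · exact card_eq_zero.2 (filter_eq_empty_iff.2 fun z _ h => hx ((this z).1 h).2)

theorem sum_adj_distCellCount (hG : IsDistanceRegularWith G δ p) (x : α) (e : ℕ) (j : Fin k) :
    ∑ y with G.Adj x y, distCellCount δ C y e j
      = ∑ h ∈ range (e + 2), p h e * distCellCount δ C x h j := by
  symm
  calc ∑ h ∈ range (e + 2), p h e * distCellCount δ C x h j
      = ∑ h ∈ range (e + 2), ∑ z ∈ {z | C z = j} with δ x z = h, #{y | G.Adj x y ∧ δ y z = e} := by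
        refine sum_congr rfl fun h _ => ?_
        rw [sum_const_nat fun z hz => by rw [hG.card_adj_eq, (mem_filter.1 hz).2], mul_comm,
          distCellCount, filter_filter]
        simp only [and_comm]
    _ = ∑ z with C z = j, #{y | G.Adj x y ∧ δ y z = e} := by
        rw [← sum_filter_of_ne (p := fun z => δ x z ∈ range (e + 2))]
        · rw [sum_fiberwise_eq_sum_filter]
        · intro z _ hz
          obtain ⟨y, hy⟩ := card_pos.1 (Nat.pos_of_ne_zero hz)
          obtain ⟨hxy, hyz⟩ := (mem_filter.1 hy).2
          have := hG.le_succ_of_adj z hxy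
          rw [mem_range]
          omega
    _ = ∑ y with G.Adj x y, distCellCount δ C y e j := by
        have := sum_card_bipartiteAbove_eq_sum_card_bipartiteBelow (fun y z => δ y z = e)
          (s := univ.filter (G.Adj x)) (t := univ.filter fun z => C z = j)
        simp only [bipartiteAbove, bipartiteBelow, filter_filter] at this
        rw [← this]
        exact sum_congr rfl fun y _ => congrArg card (filter_congr fun z _ => and_comm)

theorem distCellCount_succ_eq_zero (hG : IsDistanceRegularWith G δ p) {e : ℕ}
    (he : p (e + 1) e = 0) (x : α) (j : Fin k) : distCellCount δ C x (e + 1) j = 0 := by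
  refine card_eq_zero.2 (filter_eq_empty_iff.2 fun z _ hz => ?_)
  obtain ⟨y, hxy, hyz⟩ := hG.exists_adj_of_eq_succ hz.1
  have := hG.card_adj_eq x z e
  rw [hz.1, he, card_eq_zero, filter_eq_empty_iff] at this
  exact this (mem_univ y) ⟨hxy, hyz⟩

end IsDistanceRegularWith

theorem IsEquitableK.distCellCount_factorsThrough (hC : IsEquitableK G C S)
    (hG : IsDistanceRegularWith G δ p) (h : ℕ) (j : Fin k) :
    (fun x => distCellCount δ C x h j).FactorsThrough C := by
  induction h using Nat.strong_induction_on with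
  | _ h ih =>
  intro x x' hxx'
  rcases h with _ | e
  · simp only [hG.distCellCount_zero, hxx']
  by_cases he : p (e + 1) e = 0
  · simp only [hG.distCellCount_succ_eq_zero he]
  -- the recursion `A₁ A_e = Σ_h p^h_{1,e} A_h` determines `A_{e+1}` from lower distances
  have hsum := hC.sum_adj_factorsThrough (ih e e.lt_succ_self) hxx'
  simp only [hG.sum_adj_distCellCount, sum_range_succ _ (e + 1)] at hsum
  rw [sum_congr rfl fun h hh => congrArg (p h e * ·) (ih h (mem_range.1 hh) hxx')] at hsum
  exact Nat.eq_of_mul_eq_mul_left (Nat.pos_of_ne_zero he) (Nat.add_left_cancel hsum)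

end DistanceRegular

section Hamming

variable {ι β : Type*} [Fintype ι] [DecidableEq β]

theorem hammingDist_add_right [Add β] [IsRightCancelAdd β] (a b c : ι → β) :
    hammingDist (a + c) (b + c) = hammingDist a b := by
  simp only [hammingDist, Pi.add_apply, ne_eq, add_left_inj]

theorem hammingDist_comp_perm (σ : Equiv.Perm ι) (a b : ι → β) :
    hammingDist (a ∘ σ) (b ∘ σ) = hammingDist a b :=
  card_equiv σ (by simp)

theorem exists_hammingDist_eq_and_eq_sub [DecidableEq ι] {x z : ι → β} {m : ℕ}
    (hm : m ≤ hammingDist x z) :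
    ∃ y, hammingDist x y = m ∧ hammingDist y z = hammingDist x z - m := by
  obtain ⟨s, hs, rfl⟩ := exists_subset_card_eq hm
  refine ⟨fun i => if i ∈ s then z i else x i, congrArg card ?_, ?_⟩
  · ext i
    by_cases hi : i ∈ s
    · simp [hi, (mem_filter.1 (hs hi)).2]
    · simp [hi]
  · unfold hammingDist
    rw [← card_sdiff_of_subset hs]
    congr 1
    ext i
    by_cases hi : i ∈ s <;> simp [hi]

end Hamming

section ZModTwo

variable {ι : Type*} [Fintype ι]

theorem natCast_hammingNorm_zmod_two (x : ι → ZMod 2) : (hammingNorm x : ZMod 2) = ∑ i, x i := by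
  rw [hammingNorm, card_filter, Nat.cast_sum]
  exact sum_congr rfl fun i _ => by generalize x i = a; revert a; decide

theorem natCast_hammingDist_zmod_two (x y : ι → ZMod 2) :
    (hammingDist x y : ZMod 2) = hammingDist x 0 + hammingDist y 0 := by
  rw [hammingDist_eq_hammingNorm, hammingDist_zero_right, hammingDist_zero_right,
    natCast_hammingNorm_zmod_two, natCast_hammingNorm_zmod_two, natCast_hammingNorm_zmod_two,
    ← sum_add_distrib]
  simp only [Pi.add_apply, Pi.neg_apply, CharTwo.neg_eq]

theorem even_hammingDist_iff (x y : ι → ZMod 2) :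
    Even (hammingDist x y) ↔ (Even (hammingDist x 0) ↔ Even (hammingDist y 0)) := by
  simp only [← ZMod.natCast_eq_zero_iff_even]
  rw [natCast_hammingDist_zmod_two]
  generalize (hammingDist x 0 : ZMod 2) = a
  generalize (hammingDist y 0 : ZMod 2) = b
  revert a b
  decide

theorem hammingDist_add_one (x y : ι → ZMod 2) :
    hammingDist x (y + 1) = Fintype.card ι - hammingDist x y := by
  have hflip : ∀ a b : ZMod 2, a ≠ b + 1 ↔ ¬a ≠ b := by decide
  have := card_filter_add_card_filter_not (s := univ) fun i => x i ≠ y i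
  simp only [hammingDist, Pi.add_apply, Pi.one_apply, hflip, card_univ] at this ⊢
  omega

theorem exists_perm_comp_eq {u u' : ι → ZMod 2} (h : hammingNorm u = hammingNorm u') :
    ∃ σ : Equiv.Perm ι, u ∘ σ = u' := by
  classical
  have e : {i // u' i ≠ 0} ≃ {i // u i ≠ 0} :=
    Fintype.equivOfCardEq (by simp only [Fintype.card_subtype]; exact h.symm)
  refine ⟨e.extendSubtype, funext fun i => ?_⟩
  have key : ∀ a b : ZMod 2, (a ≠ 0 ↔ b ≠ 0) → a = b := by decide
  by_cases hi : u' i ≠ 0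
  · exact key _ _ (iff_of_true (e.extendSubtype_mem i hi) hi)
  · exact key _ _ (iff_of_false (e.extendSubtype_not_mem i hi) hi)

theorem exists_isometry_of_hammingDist_eq {x z x' z' : ι → ZMod 2}
    (h : hammingDist x z = hammingDist x' z') :
    ∃ ψ : (ι → ZMod 2) ≃ (ι → ZMod 2),
      (∀ a b, hammingDist (ψ a) (ψ b) = hammingDist a b) ∧ ψ x = x' ∧ ψ z = z' := by
  rw [hammingDist_eq_hammingNorm, hammingDist_eq_hammingNorm] at h
  obtain ⟨σ, hσ⟩ := exists_perm_comp_eq h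
  set c := x' - x ∘ σ
  refine ⟨⟨fun a => a ∘ σ + c, fun b => (b - c) ∘ σ.symm, fun a => ?_, fun b => ?_⟩,
    fun a b => ?_, ?_, ?_⟩
  · ext i; simp
  · ext i; simp
  · exact (hammingDist_add_right _ _ c).trans (hammingDist_comp_perm σ a b)
  · simp [c]
  · ext i
    have := congrFun hσ i
    simp only [Function.comp_apply, Pi.add_apply, Pi.neg_apply] at this
    simp only [Equiv.coe_fn_mk, Pi.add_apply, Function.comp_apply, c, Pi.sub_apply]
    linear_combination this

abbrev EvenWord (ι : Type*) [Fintype ι] :=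
  {x : ι → ZMod 2 // Even (hammingDist x 0)}

def halvedCubeDist (x z : EvenWord ι) : ℕ := hammingDist x.1 z.1 / 2

theorem two_mul_halvedCubeDist (x z : EvenWord ι) :
    2 * halvedCubeDist x z = hammingDist x.1 z.1 :=
  Nat.two_mul_div_two_of_even ((even_hammingDist_iff _ _).2 (iff_of_true x.2 z.2))

end ZModTwo

section HalvedCube

variable {ι : Type*} [Fintype ι] [DecidableEq ι]

theorem cube_adj {x y : ι → ZMod 2} : (cube ι).Adj x y ↔ hammingDist x y = 1 := Iff.rfl

theorem halvedCube_adj {x y : EvenWord ι} : (halvedCube ι).Adj x y ↔ hammingDist x.1 y.1 = 2 :=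
  Iff.rfl

theorem halvedCube_card_adj_congr {x z x' z' : EvenWord ι}
    (h : halvedCubeDist x z = halvedCubeDist x' z') (e : ℕ) :
    #{y | (halvedCube ι).Adj x y ∧ halvedCubeDist y z = e}
      = #{y | (halvedCube ι).Adj x' y ∧ halvedCubeDist y z' = e} := by
  have hd : hammingDist x.1 z.1 = hammingDist x'.1 z'.1 := by
    rw [← two_mul_halvedCubeDist, h, two_mul_halvedCubeDist]
  obtain ⟨ψ, hψ, hx, hz⟩ := exists_isometry_of_hammingDist_eq hd
  have heven : ∀ a, Even (hammingDist a 0) ↔ Even (hammingDist (ψ a) 0) := by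
    intro a
    have h₁ := even_hammingDist_iff a x.1
    have h₂ := even_hammingDist_iff (ψ a) (ψ x.1)
    rw [hψ, hx] at h₂
    have := x.2
    have := x'.2
    tauto
  refine card_equiv (ψ.subtypeEquiv heven) fun y => ?_
  simp only [mem_filter, mem_univ, true_and, halvedCube_adj, halvedCubeDist,
    Equiv.subtypeEquiv_apply, ← hx, ← hz, hψ]

theorem halvedCube_isDistanceRegularWith :
    ∃ p, IsDistanceRegularWith (halvedCube ι) halvedCubeDist p := by
  refine ⟨fun h e => Function.extend (fun q : EvenWord ι × EvenWord ι => halvedCubeDist q.1 q.2)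
    (fun q => #{y | (halvedCube ι).Adj q.1 y ∧ halvedCubeDist y q.2 = e}) 0 h,
    ⟨fun {x z} => ?_, fun {x y} z hxy => ?_, fun {x z e} hxz => ?_, fun x z e => ?_⟩⟩
  · have := two_mul_halvedCubeDist x z
    rw [Subtype.ext_iff, ← hammingDist_eq_zero]
    omega
  · have := hammingDist_triangle x.1 y.1 z.1
    have := two_mul_halvedCubeDist x z
    have := two_mul_halvedCubeDist y z
    rw [halvedCube_adj] at hxy
    omega
  · have hxz2 := two_mul_halvedCubeDist x z
    obtain ⟨y, hxy, hyz⟩ := exists_hammingDist_eq_and_eq_sub (x := x.1) (z := z.1) (m := 2)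
      (by omega)
    have hy : Even (hammingDist y 0) :=
      ((even_hammingDist_iff x.1 y).1 (by rw [hxy]; exact even_two)).1 x.2
    refine ⟨⟨y, hy⟩, hxy, ?_⟩
    simp only [halvedCubeDist, hyz]
    omega
  · have hfac : Function.FactorsThrough (fun q : EvenWord ι × EvenWord ι =>
        #{y | (halvedCube ι).Adj q.1 y ∧ halvedCubeDist y q.2 = e})
        (fun q => halvedCubeDist q.1 q.2) := fun _ _ h => halvedCube_card_adj_congr h e
    exact (hfac.extend_apply 0 (x, z)).symm

end HalvedCube

section Extension

variable {ι : Type*} [Fintype ι] [DecidableEq ι] {k : ℕ} {C : EvenWord ι → Fin k}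
  {C' : (ι → ZMod 2) → Fin k}

theorem card_cube_adj_eq_card_hammingDist_self (hι : 0 < Fintype.card ι)
    (hinv : ∀ x, C' (x + 1) = C' x) (v : ι → ZMod 2) (j : Fin k) :
    #{w | (cube ι).Adj v w ∧ C' w = j}
      = #{w | hammingDist v w = Fintype.card ι - 1 ∧ C' w = j} := by
  refine card_equiv (Equiv.addRight 1) fun w => ?_
  have := hammingDist_le_card_fintype (x := v) (y := w)
  simp only [mem_filter, mem_univ, true_and, cube_adj, Equiv.coe_addRight, hammingDist_add_one,
    hinv]
  omega

theorem card_cube_adj_eq_card_hammingDist_add_one (hι : 0 < Fintype.card ι)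
    (v : ι → ZMod 2) (j : Fin k) :
    #{w | (cube ι).Adj v w ∧ C' w = j}
      = #{w | hammingDist (v + 1) w = Fintype.card ι - 1 ∧ C' w = j} := by
  refine congrArg card (filter_congr fun w _ => ?_)
  have := hammingDist_le_card_fintype (x := v) (y := w)
  rw [cube_adj, hammingDist_comm (v + 1), hammingDist_add_one, hammingDist_comm w]
  omega

theorem card_hammingDist_eq_distCellCount (hι : Odd (Fintype.card ι))
    (hagree : ∀ x (h : Even (hammingDist x 0)), C' x = C ⟨x, h⟩) (x : EvenWord ι) (j : Fin k) :
    #{w | hammingDist x.1 w = Fintype.card ι - 1 ∧ C' w = j}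
      = distCellCount halvedCubeDist C x ((Fintype.card ι - 1) / 2) j := by
  have hn := Nat.two_mul_div_two_of_even (Nat.Odd.sub_odd hι odd_one)
  symm
  refine card_bij (fun z _ => z.1) (fun z hz => ?_) (fun z _ z' _ h => Subtype.ext h)
    (fun w hw => ?_)
  · obtain ⟨hxz, hz⟩ := (mem_filter.1 hz).2
    have := two_mul_halvedCubeDist x z
    refine mem_filter.2 ⟨mem_univ _, by omega, ?_⟩
    rw [hagree z.1 z.2, hz]
  · obtain ⟨hxw, hw⟩ := (mem_filter.1 hw).2
    have hw_even : Even (hammingDist w 0) :=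
      ((even_hammingDist_iff x.1 w).1 (by rw [hxw, ← hn]; exact even_two_mul _)).1 x.2
    refine ⟨⟨w, hw_even⟩, mem_filter.2 ⟨mem_univ _, ?_, ?_⟩, rfl⟩
    · simp only [halvedCubeDist, hxw]
    · rw [← hagree, hw]

theorem exists_card_cube_adj_eq_distCellCount (hι : Odd (Fintype.card ι))
    (hagree : ∀ x (h : Even (hammingDist x 0)), C' x = C ⟨x, h⟩)
    (hinv : ∀ x, C' (x + 1) = C' x) (v : ι → ZMod 2) :
    ∃ x : EvenWord ι, C' v = C x ∧ ∀ j, #{w | (cube ι).Adj v w ∧ C' w = j}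
      = distCellCount halvedCubeDist C x ((Fintype.card ι - 1) / 2) j := by
  have hpos := hι.pos
  by_cases hv : Even (hammingDist v 0)
  · refine ⟨⟨v, hv⟩, hagree v hv, fun j => ?_⟩
    rw [card_cube_adj_eq_card_hammingDist_self hpos hinv,
      card_hammingDist_eq_distCellCount hι hagree ⟨v, hv⟩]
  · have hv' : Even (hammingDist (v + 1) 0) := by
      rw [hammingDist_comm, hammingDist_add_one, hammingDist_comm]
      exact Nat.Odd.sub_odd hι (Nat.not_even_iff_odd.1 hv)
    refine ⟨⟨v + 1, hv'⟩, by rw [← hagree, hinv], fun j => ?_⟩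
    rw [card_cube_adj_eq_card_hammingDist_add_one hpos,
      card_hammingDist_eq_distCellCount hι hagree ⟨v + 1, hv'⟩]

end Extension

/-- for odd `n`, extending an equitable `k`-partition `C` of the
halved `n`-cube by `C'ᵢ = Cᵢ ∪ (Cᵢ + 1̄)` (i.e. `C'` agrees with `C` on
even-weight words and is invariant under complementation) yields an equitable
`k`-partition of the `n`-cube. -/
theorem stmt4 (n k : ℕ) (hn : Odd n)
    (C : {x : Fin n → ZMod 2 // Even (hammingDist x 0)} → Fin k)
    (S : Fin k → Fin k → ℕ)
    (hC : IsEquitableK (halvedCube (Fin n)) C S)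
    (hCsurj : Function.Surjective C)
    (C' : (Fin n → ZMod 2) → Fin k)
    (hagree : ∀ (x : Fin n → ZMod 2) (h : Even (hammingDist x 0)), C' x = C ⟨x, h⟩)
    (hinv : ∀ x : Fin n → ZMod 2, C' (x + 1) = C' x) :
    ∃ S' : Fin k → Fin k → ℕ,
      IsEquitableK (cube (Fin n)) C' S' ∧ Function.Surjective C' := by
  obtain ⟨p, hG⟩ := halvedCube_isDistanceRegularWith (ι := Fin n)
  have hfac := hC.distCellCount_factorsThrough hG ((n - 1) / 2)
  refine ⟨fun i j => Function.extend C (fun x => distCellCount halvedCubeDist C x ((n - 1) / 2) j)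
    0 i, fun v j => ?_, fun i => ?_⟩
  · obtain ⟨x, hvx, hcount⟩ :=
      exists_card_cube_adj_eq_distCellCount (by rwa [Fintype.card_fin]) hagree hinv v
    rw [hcount, hvx, Fintype.card_fin]
    exact ((hfac j).extend_apply 0 x).symm
  · obtain ⟨x, rfl⟩ := hCsurj i
    exact ⟨x.1, hagree x.1 x.2⟩
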